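/- (SAVE principle) Let Y be a real random variable and Z a random vector in R^p with finite second moments. Let P be an orthogonal projection such that Y and Z are conditionally independent given PZ, the linearity condition E[Z | PZ] = PZ holds a.s., and Var(Z | PZ) = I_p - P a.s. Then (I_p - P)(E[Z Z^T | Y] - I_p) = 0 almost surely. -/

import Mathlib

/-!
Conditioning on `PZ`, the linearity and constant-variance conditions give
`E[Z Zᵀ | PZ] = Q + P Z Zᵀ P`. Conditional independence says `E[g(Z) | Y, PZ] = E[g(Z) | PZ]`
for bounded `g`; truncation and the L¹-continuity of conditional expectation extend this to the
integrable products `Zᵢ Zⱼ`. The tower property then gives `M = Q + P M P` for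
`M = E[Z Zᵀ | Y]`, and since `Q P = 0`, `Q (M - I) = Q (Q - I) = 0`.
-/

open MeasureTheory Filter ProbabilityTheory
open scoped Topology

theorem IsIdempotentElem.one_sub_mul_sub_one_eq_zero {R : Type*} [Ring R] {P M N : R}
    (hP : IsIdempotentElem P) (hM : M = 1 - P + P * N) : (1 - P) * (M - 1) = 0 := by
  rw [hM, show 1 - P + P * N - 1 = P * (N - 1) by noncomm_ring, ← mul_assoc,
    hP.one_sub_mul_self, zero_mul]

namespace Matrix

variable {l m n o R : Type*} [Fintype m] [Fintype n] [CommSemiring R]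

theorem mul_mul_apply_eq_sum (A : Matrix l m R) (M : Matrix m n R) (B : Matrix n o R)
    (i : l) (j : o) :
    (A * M * B) i j = ∑ q : m × n, A i q.1 * B q.2 j * M q.1 q.2 := by
  simp only [mul_apply, Finset.sum_mul, Fintype.sum_prod_type]
  rw [Finset.sum_comm]
  exact Finset.sum_congr rfl fun _ _ => Finset.sum_congr rfl fun _ _ => by ring

theorem vecMulVec_mulVec_self_of_isSymm {P : Matrix n n R} (hP : P.IsSymm) (z : n → R) :
    vecMulVec (P *ᵥ z) (P *ᵥ z) = P * vecMulVec z z * P := by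
  rw [mul_vecMulVec, vecMulVec_mul, ← vecMul_transpose, hP.eq]

end Matrix

namespace MeasureTheory

variable {α E : Type*} {m₁ m₂ m₀ : MeasurableSpace α} {μ : Measure[m₀] α}

theorem condExp_ae_eq_condExp_of_tendsto [NormedAddCommGroup E] [NormedSpace ℝ E]
    [CompleteSpace E] (hm₁ : m₁ ≤ m₀) (hm₂ : m₂ ≤ m₀) [SigmaFinite (μ.trim hm₁)]
    [SigmaFinite (μ.trim hm₂)] {fs : ℕ → α → E} {f : α → E}
    (hfs_meas : ∀ n, AEStronglyMeasurable (fs n) μ)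
    (hfs : ∀ᵐ x ∂μ, Tendsto (fun n => fs n x) atTop (𝓝 (f x))) {bound : α → ℝ}
    (h_int_bound : Integrable bound μ) (hfs_bound : ∀ n, ∀ᵐ x ∂μ, ‖fs n x‖ ≤ bound x)
    (hfs_eq : ∀ n, μ[fs n|m₁] =ᵐ[μ] μ[fs n|m₂]) :
    μ[f|m₁] =ᵐ[μ] μ[f|m₂] := by
  refine (condExp_ae_eq_condExpL1 hm₁ f).trans ((condExp_ae_eq_condExpL1 hm₂ f).trans ?_).symm
  rw [← Lp.ext_iff]
  refine tendsto_nhds_unique_of_eventuallyEq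
    (tendsto_condExpL1_of_dominated_convergence hm₂ _ hfs_meas h_int_bound hfs_bound hfs)
    (tendsto_condExpL1_of_dominated_convergence hm₁ _ hfs_meas h_int_bound hfs_bound hfs)
    (Eventually.of_forall fun n => ?_)
  ext1
  exact (condExp_ae_eq_condExpL1 hm₂ _).symm.trans
    ((hfs_eq n).symm.trans (condExp_ae_eq_condExpL1 hm₁ _))

theorem condExp_comp_ae_eq_of_forall_bounded {β : Type*} [MeasurableSpace β]
    (hm₁ : m₁ ≤ m₀) (hm₂ : m₂ ≤ m₀) [SigmaFinite (μ.trim hm₁)] [SigmaFinite (μ.trim hm₂)]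
    {X : α → β} (hX : ∀ g : β → ℝ, Measurable g → (∃ C, ∀ z, |g z| ≤ C) →
      μ[fun x => g (X x)|m₁] =ᵐ[μ] μ[fun x => g (X x)|m₂])
    {g : β → ℝ} (hg : Measurable g) (hgX : Integrable (fun x => g (X x)) μ) :
    μ[fun x => g (X x)|m₁] =ᵐ[μ] μ[fun x => g (X x)|m₂] := by
  refine condExp_ae_eq_condExp_of_tendsto hm₁ hm₂ (fs := fun n => truncation (g ∘ X) n)
    (fun n => hgX.1.truncation) (ae_of_all _ fun x => ?_) hgX.abs
    (fun n => ae_of_all _ fun x => abs_truncation_le_abs_self _ _ x) fun n =>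
      hX _ ((measurable_id.indicator measurableSet_Ioc).comp hg)
        ⟨|(n : ℝ)|, abs_truncation_le_bound g n⟩
  refine tendsto_const_nhds.congr' ?_
  filter_upwards [eventually_gt_atTop ⌈|g (X x)|⌉₊] with n hn
  exact (truncation_eq_self (Nat.lt_of_ceil_lt hn)).symm

theorem condExp_const_add_sum_mul [IsFiniteMeasure μ] (hm : m₁ ≤ m₀) {ι : Type*} [Fintype ι]
    (c : ℝ) (a : ι → ℝ) {f : ι → α → ℝ} (hf : ∀ i, Integrable (f i) μ) :
    μ[fun x => c + ∑ i, a i * f i x|m₁] =ᵐ[μ] fun x => c + ∑ i, a i * μ[f i|m₁] x := by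
  have hsmul : ∀ i ∈ Finset.univ, Integrable (a i • f i) μ := fun i _ => (hf i).smul (a i)
  have hfun : (fun x => c + ∑ i, a i * f i x) = (fun _ => c) + ∑ i, a i • f i := by
    ext x
    simp [Finset.sum_apply]
  filter_upwards [hfun ▸ condExp_add (integrable_const c) (integrable_finsetSum' _ hsmul) m₁,
    condExp_finsetSum hsmul m₁, ae_all_iff.2 fun i => condExp_smul (m := m₁) (μ := μ) (a i) (f i)]
    with x hadd hsum hsmul
  simp [hadd, condExp_const hm, hsum, Finset.sum_apply, hsmul]

theorem condExp_add_mul_mul_apply [IsFiniteMeasure μ] (hm : m₁ ≤ m₀) {l m n o : Type*}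
    [Fintype m] [Fintype n] (C : Matrix l o ℝ) (A : Matrix l m ℝ) (B : Matrix n o ℝ)
    {F : α → Matrix m n ℝ} (hF : ∀ k k', Integrable (fun x => F x k k') μ) (i : l) (j : o) :
    μ[fun x => (C + A * F x * B) i j|m₁] =ᵐ[μ]
      fun x => (C + A * Matrix.of (fun k k' => μ[fun y => F y k k'|m₁] x) * B) i j := by
  simp only [Matrix.add_apply, Matrix.mul_mul_apply_eq_sum]
  exact condExp_const_add_sum_mul hm _ _ fun q => hF q.1 q.2

end MeasureTheory

section SecondMoment

open Matrix

variable {Ω n : Type*} [Fintype n]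

noncomputable def condSecondMoment {m₀ : MeasurableSpace Ω} (μ : Measure[m₀] Ω)
    (m : MeasurableSpace Ω) (Z : Ω → n → ℝ) (ω : Ω) : Matrix n n ℝ :=
  Matrix.of fun i j => μ[fun ω' => Z ω' i * Z ω' j|m] ω

variable {m m' m₀ : MeasurableSpace Ω} {μ : Measure[m₀] Ω}

theorem condSecondMoment_ae_eq_add_vecMulVec {Z W : Ω → n → ℝ} {V : Matrix n n ℝ}
    (hmean : ∀ i, μ[fun ω => Z ω i|m] =ᵐ[μ] fun ω => W ω i)
    (hcov : ∀ i j, (fun ω => μ[fun ω' => Z ω' i * Z ω' j|m] ω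
        - μ[fun ω' => Z ω' i|m] ω * μ[fun ω' => Z ω' j|m] ω) =ᵐ[μ] fun _ => V i j) :
    condSecondMoment μ m Z =ᵐ[μ] fun ω => V + vecMulVec (W ω) (W ω) := by
  filter_upwards [ae_all_iff.2 hmean,
    ae_all_iff.2 fun i => ae_all_iff.2 (hcov i)] with ω hmean hcov
  ext i j
  rw [condSecondMoment, of_apply, Matrix.add_apply, vecMulVec_apply, ← hmean, ← hmean,
    ← hcov i j]
  ring

theorem condSecondMoment_ae_eq_of_condIndep [IsFiniteMeasure μ] (hm : m ≤ m₀) (hm' : m' ≤ m₀)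
    {Z : Ω → n → ℝ} (hZ : ∀ i, MemLp (fun ω => Z ω i) 2 μ)
    (hCI : ∀ g : (n → ℝ) → ℝ, Measurable g → (∃ C, ∀ z, |g z| ≤ C) →
      μ[fun ω => g (Z ω)|m' ⊔ m] =ᵐ[μ] μ[fun ω => g (Z ω)|m])
    {A B C : Matrix n n ℝ}
    (hm_eq : condSecondMoment μ m Z =ᵐ[μ] fun ω => C + A * vecMulVec (Z ω) (Z ω) * B) :
    condSecondMoment μ m' Z =ᵐ[μ] fun ω => C + A * condSecondMoment μ m' Z ω * B := by
  have hint : ∀ i j, Integrable (fun ω => Z ω i * Z ω j) μ := fun i j =>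
    (hZ i).integrable_mul (hZ j)
  have hentry : ∀ i j, μ[fun ω => Z ω i * Z ω j|m'] =ᵐ[μ]
      fun ω => (C + A * condSecondMoment μ m' Z ω * B) i j := by
    intro i j
    calc μ[fun ω => Z ω i * Z ω j|m']
        =ᵐ[μ] μ[μ[fun ω => Z ω i * Z ω j|m' ⊔ m]|m'] :=
          (condExp_condExp_of_le le_sup_left (sup_le hm' hm)).symm
      _ =ᵐ[μ] μ[μ[fun ω => Z ω i * Z ω j|m]|m'] :=
          condExp_congr_ae (condExp_comp_ae_eq_of_forall_bounded (sup_le hm' hm) hm hCI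
            (g := fun z => z i * z j) (by fun_prop) (hint i j))
      _ =ᵐ[μ] μ[fun ω => (C + A * vecMulVec (Z ω) (Z ω) * B) i j|m'] :=
          condExp_congr_ae (hm_eq.mono fun ω h => congrFun (congrFun h i) j)
      _ =ᵐ[μ] _ := condExp_add_mul_mul_apply hm' _ _ _ hint i j
  filter_upwards [ae_all_iff.2 fun i => ae_all_iff.2 (hentry i)] with ω hω
  ext i j
  exact hω i j

theorem ae_one_sub_mul_condSecondMoment_sub_one_eq_zero [IsFiniteMeasure μ] [DecidableEq n]
    (hm : m ≤ m₀) (hm' : m' ≤ m₀) {Z : Ω → n → ℝ} (hZ : ∀ i, MemLp (fun ω => Z ω i) 2 μ)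
    {P : Matrix n n ℝ} (hPproj : IsIdempotentElem P) (hPsym : P.IsSymm)
    (hCI : ∀ g : (n → ℝ) → ℝ, Measurable g → (∃ C, ∀ z, |g z| ≤ C) →
      μ[fun ω => g (Z ω)|m' ⊔ m] =ᵐ[μ] μ[fun ω => g (Z ω)|m])
    (hLC : ∀ i, μ[fun ω => Z ω i|m] =ᵐ[μ] fun ω => (P *ᵥ Z ω) i)
    (hCCV : ∀ i j, (fun ω => μ[fun ω' => Z ω' i * Z ω' j|m] ω
        - μ[fun ω' => Z ω' i|m] ω * μ[fun ω' => Z ω' j|m] ω) =ᵐ[μ] fun _ => (1 - P) i j) :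
    ∀ᵐ ω ∂μ, (1 - P) * (condSecondMoment μ m' Z ω - 1) = 0 := by
  have hm_eq : condSecondMoment μ m Z =ᵐ[μ] fun ω => 1 - P + P * vecMulVec (Z ω) (Z ω) * P := by
    simpa only [vecMulVec_mulVec_self_of_isSymm hPsym] using
      condSecondMoment_ae_eq_add_vecMulVec hLC hCCV
  filter_upwards [condSecondMoment_ae_eq_of_condIndep hm hm' hZ hCI hm_eq] with ω hω
  exact hPproj.one_sub_mul_sub_one_eq_zero (hω.trans (by rw [mul_assoc]))

end SecondMoment

/-- **SAVE principle.** If `Y` and `Z` are conditionally independent given `PZ`,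
`E[Z | PZ] = PZ` a.s. and `Var(Z | PZ) = I - P` a.s., then
`(I - P)(E[Z Zᵀ | Y] - I) = 0` almost surely. -/
theorem stmt_2 {Ω : Type*} [MeasurableSpace Ω] (μ : Measure Ω) [IsProbabilityMeasure μ]
    {p : ℕ} (Y : Ω → ℝ) (hY : Measurable Y)
    (Z : Ω → Fin p → ℝ) (hZmeas : Measurable Z)
    (hZ2 : ∀ i, MemLp (fun ω => Z ω i) 2 μ)
    (P : Matrix (Fin p) (Fin p) ℝ) (hPproj : P * P = P) (hPsym : P.transpose = P)
    (m mY : MeasurableSpace Ω)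
    (hm : m = MeasurableSpace.comap (fun ω => P.mulVec (Z ω)) inferInstance)
    (hmY : mY = MeasurableSpace.comap Y inferInstance)
    (hCI : ∀ g : (Fin p → ℝ) → ℝ, Measurable g → (∃ Cg, ∀ z, |g z| ≤ Cg) →
      μ[(fun ω => g (Z ω))|mY ⊔ m] =ᵐ[μ] μ[(fun ω => g (Z ω))|m])
    (hLC : ∀ i, μ[(fun ω => Z ω i)|m] =ᵐ[μ] fun ω => P.mulVec (Z ω) i)
    (hCCV : ∀ i j,
      (fun ω => (μ[(fun ω' => Z ω' i * Z ω' j)|m]) ω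
          - (μ[(fun ω' => Z ω' i)|m]) ω * (μ[(fun ω' => Z ω' j)|m]) ω)
        =ᵐ[μ] fun _ => (1 - P) i j) :
    ∀ᵐ ω ∂μ,
      (1 - P) * ((Matrix.of fun i j => (μ[(fun ω' => Z ω' i * Z ω' j)|mY]) ω) - 1) = 0 := by
  subst hm hmY
  exact ae_one_sub_mul_condSecondMoment_sub_one_eq_zero
    (Measurable.comap_le (by fun_prop)) hY.comap_le hZ2 hPproj hPsym hCI hLC hCCV
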